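/- arXiv:1908.09473 — 2 statements merged into one kernel-verified Lean document; each statement's English description precedes it below -/
import Mathlib

section
/- Let k ≥ 3 and let G be a connected k-chordal finite simple graph of diameter at most D. Let P ⊆ V(G) be a set of vertices such that the subgraph of G induced by P is connected, and let G_P be the 1-hop extension of P in G. Then for all vertices u, v of G_P (i.e., u, v ∈ N⁺(P)), the distance between u and v in G_P is at most kD + 2. -/
/-- The 1-hop extension of a vertex set `P` in `G`: the subgraph of `G` consisting of
all edges of `G` with at least one endpoint in `P` (modeled as a graph on the same
vertex type; vertices outside the closed neighborhood of `P` are isolated). -/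
def oneHopExt {V : Type*} (G : SimpleGraph V) (P : Set V) : SimpleGraph V where
  Adj u v := G.Adj u v ∧ (u ∈ P ∨ v ∈ P)
  symm := ⟨fun u v h => ⟨h.1.symm, h.2.symm⟩⟩
  loopless := ⟨fun v h => G.loopless.irrefl v h.1⟩

/-- The closed neighborhood `N⁺(P) = P ∪ N(P)` of a vertex set `P`; this is the vertex
set of the 1-hop extension of `P`. -/
def nbhdPlus {V : Type*} (G : SimpleGraph V) (P : Set V) : Set V :=
  P ∪ {v | ∃ p ∈ P, G.Adj p v}

/-- A cycle `w` has a chord: an edge of `G` joining two vertices of the cycle which is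
not an edge of the cycle. -/
def HasChord {V : Type*} {G : SimpleGraph V} {v : V} (w : G.Walk v v) : Prop :=
  ∃ a b, a ∈ w.support ∧ b ∈ w.support ∧ G.Adj a b ∧ s(a, b) ∉ w.edges

/-- `G` is `k`-chordal: every cycle of length greater than `k` has a chord. -/
def KChordal {V : Type*} (G : SimpleGraph V) (k : ℕ) : Prop :=
  ∀ (v : V) (w : G.Walk v v), w.IsCycle → k < w.length → HasChord w

/-!
Let `x, y ∈ N⁺(P)` be joined by a shortest path `w` of `G` whose inner vertices avoid `N⁺(P)`.
A shortest `x`–`y` path `σ` using only the edges of `G_P` inside `P ∪ {x, y}` has all its inner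
vertices in `P`. Since shortest paths are chordless and no edge joins `P` to a vertex outside
`N⁺(P)`, the cycle `w σ⁻¹` is chordless, so `|σ| + |w| ≤ k`. Cutting a shortest `u`–`v` path of
`G` at its vertices in `N⁺(P)` and applying this to each piece gives
`dist_{G_P}(u, v) ≤ k · dist_G(u, v) ≤ k D`.
-/

open SimpleGraph Walk

namespace SimpleGraph.Walk

variable {V : Type*} {G : SimpleGraph V} {u v : V}

theorem isChordless_of_length_eq_dist (p : G.Walk u v) (hp : p.length = G.dist u v) :
    p.IsChordless := by
  rw [isChordless_iff_forall_mem_edges]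
  intro a b ha hb hab
  obtain ⟨i, rfl, hi⟩ := mem_support_iff_exists_getVert.mp ha
  obtain ⟨j, rfl, hj⟩ := mem_support_iff_exists_getVert.mp hb
  clear ha hb
  wlog hij : i ≤ j generalizing i j
  · rw [Sym2.eq_swap]
    exact this j hj i hi hab.symm (by omega)
  have hshortcut := dist_le ((p.take i).append (cons hab (p.drop j)))
  simp only [length_append, take_length, length_cons, drop_length] at hshortcut
  have hne : i ≠ j := by rintro rfl; exact hab.ne rfl
  exact p.mk_mem_edges_iff_exists.mpr ⟨i, by omega, by rw [show j = i + 1 by omega]⟩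

theorem IsPath.start_notMem_support_tail {p : G.Walk u v} (hp : p.IsPath) :
    u ∉ p.support.tail :=
  (List.nodup_cons.mp (p.cons_tail_support ▸ hp.support_nodup)).1

theorem mem_of_mem_support_of_adj_mem {S : Set V} (p : G.Walk u v)
    (hS : ∀ ⦃a b⦄, G.Adj a b → b ∈ S) (hu : u ∈ S) : ∀ z ∈ p.support, z ∈ S := by
  intro z hz
  rw [← cons_map_snd_darts, List.mem_cons, List.mem_map] at hz
  obtain rfl | ⟨d, -, rfl⟩ := hz
  exacts [hu, hS d.adj]

theorem IsPath.isCycle_append_of_forall_mem {p : G.Walk u v} {q : G.Walk v u}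
    (hp : p.IsPath) (hq : q.IsPath) (hpq : ∀ z ∈ p.support, z ∈ q.support → z = u ∨ z = v)
    (hlen : 1 < q.length) :
    (p.append q).IsCycle := by
  refine hp.isCycle_append hq (fun z hzp hzq => ?_) (.inr hlen)
  rcases hpq z (List.mem_of_mem_tail hzp) (List.mem_of_mem_tail hzq) with rfl | rfl
  exacts [hp.start_notMem_support_tail hzp, hq.start_notMem_support_tail hzq]

theorem IsChordless.append_of_forall_adj {w : V} {p : G.Walk u v} {q : G.Walk v w}
    (hp : p.IsChordless) (hq : ∀ a ∈ q.support, a ∉ p.support →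
      ∀ b ∈ (p.append q).support, G.Adj a b → s(a, b) ∈ q.edges) :
    (p.append q).IsChordless := by
  rw [isChordless_iff_forall_mem_edges]
  intro a b ha hb hab
  rw [edges_append, List.mem_append]
  by_cases hap : a ∈ p.support
  · by_cases hbp : b ∈ p.support
    · exact .inl (hp.mem_edges hap hbp hab)
    · have hbq := ((mem_support_append_iff p q).mp hb).resolve_left hbp
      exact .inr (Sym2.eq_swap ▸ hq b hbq hbp a ha hab.symm)
  · exact .inr (hq a (((mem_support_append_iff p q).mp ha).resolve_left hap) hap b hb hab)

theorem exists_first_getVert_mem {S : Set V} (p : G.Walk u v) (hp : 0 < p.length) (hv : v ∈ S) :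
    ∃ t, 0 < t ∧ t ≤ p.length ∧ p.getVert t ∈ S ∧
      ∀ z ∈ (p.take t).support, z ≠ u → z ≠ p.getVert t → z ∉ S := by
  classical
  have hv' : p.getVert p.length ∈ S := by rwa [getVert_length]
  have hex : ∃ i, 0 < i ∧ p.getVert i ∈ S := ⟨p.length, hp, hv'⟩
  obtain ⟨ht0, ht⟩ := Nat.find_spec hex
  have htp : Nat.find hex ≤ p.length := Nat.find_min' hex ⟨hp, hv'⟩
  refine ⟨Nat.find hex, ht0, htp, ht, fun z hz hzu hzt hzS => ?_⟩
  obtain ⟨i, rfl, hi⟩ := mem_support_iff_exists_getVert.mp hz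
  rw [take_length] at hi
  rw [take_getVert, min_eq_right (by omega)] at hzu hzt hzS
  have hi0 : i ≠ 0 := by rintro rfl; exact hzu p.getVert_zero
  have hit : i ≠ Nat.find hex := by rintro rfl; exact hzt rfl
  exact Nat.find_min hex (by omega) ⟨by omega, hzS⟩

end SimpleGraph.Walk

theorem KChordal.length_le_of_isCycle {V : Type*} {G : SimpleGraph V} {k : ℕ}
    (h : KChordal G k) {v : V} {c : G.Walk v v} (hc : c.IsCycle) (hcl : c.IsChordless) :
    c.length ≤ k := by
  by_contra! hlong
  obtain ⟨a, b, ha, hb, hab, hnot⟩ := h v c hc hlong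
  exact hnot (hcl.mem_edges ha hb hab)

section OneHopExt

variable {V : Type*} {G : SimpleGraph V} {P : Set V}

def oneHopExtWithin (G : SimpleGraph V) (P S : Set V) : SimpleGraph V where
  Adj a b := (oneHopExt G P).Adj a b ∧ a ∈ S ∧ b ∈ S
  symm := ⟨fun _ _ h => ⟨h.1.symm, h.2.2, h.2.1⟩⟩
  loopless := ⟨fun _ h => (oneHopExt G P).loopless.irrefl _ h.1⟩

theorem oneHopExt_le : oneHopExt G P ≤ G :=
  fun _ _ h => h.1

theorem oneHopExtWithin_le_oneHopExt (S : Set V) : oneHopExtWithin G P S ≤ oneHopExt G P :=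
  fun _ _ h => h.1

theorem oneHopExtWithin_reachable {S : Set V} (hP : (G.induce P).Connected) (hPS : P ⊆ S)
    {x y : V} (hx : x ∈ nbhdPlus G P) (hy : y ∈ nbhdPlus G P) (hxS : x ∈ S) (hyS : y ∈ S) :
    (oneHopExtWithin G P S).Reachable x y := by
  have reachable_P {a : V} (ha : a ∈ nbhdPlus G P) (haS : a ∈ S) :
      ∃ p ∈ P, (oneHopExtWithin G P S).Reachable a p := by
    rcases ha with ha | ⟨p, hp, hpa⟩
    · exact ⟨a, ha, .rfl⟩
    · exact ⟨p, hp, Adj.reachable ⟨⟨hpa.symm, .inr hp⟩, haS, hPS hp⟩⟩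
  let ι : G.induce P →g oneHopExtWithin G P S :=
    ⟨Subtype.val, fun {a b} h => ⟨⟨h, .inl a.2⟩, hPS a.2, hPS b.2⟩⟩
  obtain ⟨p, hp, hxp⟩ := reachable_P hx hxS
  obtain ⟨q, hq, hyq⟩ := reachable_P hy hyS
  exact hxp.trans (((hP ⟨p, hp⟩ ⟨q, hq⟩).map ι).trans hyq.symm)

theorem KChordal.length_add_length_le {k : ℕ} (hch : KChordal G k) {x y : V}
    (w : G.Walk x y) (hw : w.length = G.dist x y)
    (hinner : ∀ z ∈ w.support, z ≠ x → z ≠ y → z ∉ nbhdPlus G P)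
    (σ : (oneHopExtWithin G P (insert x (insert y P))).Walk x y)
    (hσ : σ.length = (oneHopExtWithin G P (insert x (insert y P))).dist x y)
    (hσlong : 1 < σ.length) :
    w.length + σ.length ≤ k := by
  have hHG : oneHopExtWithin G P (insert x (insert y P)) ≤ G :=
    (oneHopExtWithin_le_oneHopExt _).trans oneHopExt_le
  have hσS := σ.mem_of_mem_support_of_adj_mem (fun _ _ h => h.2.2) (Set.mem_insert x _)
  have hσinner : ∀ z ∈ σ.support, z ≠ x → z ≠ y → z ∈ P := by
    intro z hz hzx hzy
    rcases hσS z hz with rfl | rfl | hz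
    exacts [absurd rfl hzx, absurd rfl hzy, hz]
  set σG : G.Walk y x := (σ.mapLe hHG).reverse
  have hσG_support : ∀ z, z ∈ σG.support ↔ z ∈ σ.support := by
    simp [σG, support_reverse]
  have hσG_edges : ∀ e, e ∈ σG.edges ↔ e ∈ σ.edges := by
    simp [σG, edges_reverse]
  have hcycle : (w.append σG).IsCycle := by
    refine (w.isPath_of_length_eq_dist hw).isCycle_append_of_forall_mem
      ((σ.isPath_of_length_eq_dist hσ).mapLe hHG).reverse (fun z hzw hzσ => ?_)
      (by simpa [σG] using hσlong)
    by_contra! hz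
    exact hinner z hzw hz.1 hz.2 (.inl (hσinner z ((hσG_support z).mp hzσ) hz.1 hz.2))
  have hchordless : (w.append σG).IsChordless := by
    refine (w.isChordless_of_length_eq_dist hw).append_of_forall_adj fun a haσ haw b hb hab => ?_
    rw [hσG_support] at haσ
    rw [hσG_edges]
    have haP : a ∈ P := hσinner a haσ (fun h => haw (h ▸ w.start_mem_support))
      (fun h => haw (h ▸ w.end_mem_support))
    by_cases hbσ : b ∈ σ.support
    · exact (σ.isChordless_of_length_eq_dist hσ).mem_edges haσ hbσ
        ⟨⟨hab, .inl haP⟩, hσS a haσ, hσS b hbσ⟩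
    · rw [mem_support_append_iff, hσG_support, or_iff_left hbσ] at hb
      exact absurd (.inr ⟨a, haP, hab⟩) (hinner b hb
        (fun h => hbσ (h ▸ σ.start_mem_support)) (fun h => hbσ (h ▸ σ.end_mem_support)))
  simpa [σG] using hch.length_le_of_isCycle hcycle hchordless

theorem exists_walk_oneHopExt_length_add_le {k : ℕ} (hch : KChordal G k) (hk : 2 ≤ k)
    (hP : (G.induce P).Connected) {x y : V} (hx : x ∈ nbhdPlus G P) (hy : y ∈ nbhdPlus G P)
    (w : G.Walk x y) (hw : w.length = G.dist x y)
    (hinner : ∀ z ∈ w.support, z ≠ x → z ≠ y → z ∉ nbhdPlus G P) :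
    ∃ p : (oneHopExt G P).Walk x y, p.length + w.length ≤ k := by
  by_cases hxy : x = y
  · subst hxy
    exact ⟨.nil, by simp [hw]⟩
  by_cases hadj : (oneHopExt G P).Adj x y
  · refine ⟨hadj.toWalk, ?_⟩
    rw [hw, dist_eq_one_iff_adj.mpr hadj.1]
    simpa using hk
  have hPS : P ⊆ insert x (insert y P) :=
    fun _ hp => Set.mem_insert_of_mem _ (Set.mem_insert_of_mem _ hp)
  obtain ⟨σ, hσ⟩ := (oneHopExtWithin_reachable hP hPS hx hy (Set.mem_insert x _)
    (Set.mem_insert_of_mem _ (Set.mem_insert y P))).exists_walk_length_eq_dist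
  have hσlong : 1 < σ.length :=
    hσ ▸ σ.reachable.one_lt_dist_of_ne_of_not_adj hxy fun h => hadj h.1
  refine ⟨σ.mapLe (oneHopExtWithin_le_oneHopExt _), ?_⟩
  simpa [add_comm] using hch.length_add_length_le w hw hinner σ hσ hσlong

theorem exists_walk_oneHopExt_length_le_mul_dist {k : ℕ} (hch : KChordal G k) (hk : 2 ≤ k)
    (hP : (G.induce P).Connected) {x y : V} (hx : x ∈ nbhdPlus G P) (hy : y ∈ nbhdPlus G P) :
    ∃ p : (oneHopExt G P).Walk x y, p.length ≤ k * G.dist x y := by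
  induction hn : G.dist x y using Nat.strong_induction_on generalizing x with
  | _ n ih =>
  by_cases hxy : x = y
  · subst hxy
    exact ⟨.nil, by simp⟩
  have hreach : G.Reachable x y :=
    (oneHopExtWithin_reachable hP (Set.subset_univ P) hx hy (Set.mem_univ x)
      (Set.mem_univ y)).mono ((oneHopExtWithin_le_oneHopExt _).trans oneHopExt_le)
  obtain ⟨w, hw⟩ := hreach.exists_walk_length_eq_dist
  have hn0 : 0 < n := hn ▸ hreach.pos_dist_of_ne hxy
  have hwn : w.length = n := hw.trans hn
  obtain ⟨t, ht0, htn, hz, hinner⟩ := w.exists_first_getVert_mem (hwn ▸ hn0) hy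
  rw [hwn] at htn
  obtain ⟨p₁, hp₁⟩ := exists_walk_oneHopExt_length_add_le hch hk hP hx hz (w.take t)
    (length_eq_dist_of_subwalk hw (w.isSubwalk_take t)) hinner
  obtain ⟨p₂, hp₂⟩ := ih (n - t) (by omega) hz
    (by rw [← length_eq_dist_of_subwalk hw (w.isSubwalk_drop t), drop_length]; omega)
  refine ⟨p₁.append p₂, ?_⟩
  calc (p₁.append p₂).length = p₁.length + p₂.length := length_append _ _
    _ ≤ k * t + k * (n - t) := by
      have := Nat.le_mul_of_pos_right k ht0
      rw [take_length] at hp₁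
      omega
    _ = k * n := by rw [← mul_add, Nat.add_sub_cancel' htn]

end OneHopExt

theorem oneHopExt_dist_le_of_kChordal_nbhd_general {V : Type*} (G : SimpleGraph V)
    (k D : ℕ) (hk : 3 ≤ k) (hchordal : KChordal G k)
    (hdiam : ∀ u v : V, G.dist u v ≤ D)
    (P : Set V) (hP : (G.induce P).Connected)
    (u v : V) (hu : u ∈ nbhdPlus G P) (hv : v ∈ nbhdPlus G P) :
    (oneHopExt G P).dist u v ≤ k * D + 2 := by
  obtain ⟨p, hp⟩ := exists_walk_oneHopExt_length_le_mul_dist hchordal (by omega) hP hu hv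
  calc (oneHopExt G P).dist u v ≤ p.length := dist_le p
    _ ≤ k * G.dist u v := hp
    _ ≤ k * D := Nat.mul_le_mul_left k (hdiam u v)
    _ ≤ k * D + 2 := Nat.le_add_right _ _

/-- For a connected `k`-chordal graph `G` (`k ≥ 3`) of diameter at most `D` and a set `P`
inducing a connected subgraph, any two vertices of the 1-hop extension of `P`
(i.e. vertices of `N⁺(P)`) are at distance at most `k·D + 2` in the 1-hop extension. -/
theorem oneHopExt_dist_le_of_kChordal_nbhd {V : Type*} [Fintype V] (G : SimpleGraph V)
    (k D : ℕ) (hk : 3 ≤ k) (hconn : G.Connected) (hchordal : KChordal G k)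
    (hdiam : ∀ u v : V, G.dist u v ≤ D)
    (P : Set V) (hP : (G.induce P).Connected)
    (u v : V) (hu : u ∈ nbhdPlus G P) (hv : v ∈ nbhdPlus G P) :
    (oneHopExt G P).dist u v ≤ k * D + 2 :=
  oneHopExt_dist_le_of_kChordal_nbhd_general G k D hk hchordal hdiam P hP u v hu hv
end

section
/- Let k ≥ 4 be an even integer, K = k/2 − 1, and let D and N be integers with D > 2K and N ≥ 2kD; set x = D − K. Then the graph G(k,x,N) belongs to the class 𝒢(n, N, xK + 3, 1), where n is the number of vertices of G(k,x,N). That is, there exist a partition X_1, …, X_{xK+3} of the vertex set with X_1 and X_{xK+3} singletons and a partition Q_1, …, Q_N of the remaining vertices satisfying conditions (C1), (C2), and (C3) with c = 1. -/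
/-!
Take the source `s = v_{2,0}` and the sink `r = v_{2,xK}` in the second row, and let `Q_i` be
row `i` with `s` and `r` removed: a path whose ends are adjacent to `s` and to `r`. Layer the
other vertices by column, `v_{1,j}` lying in column `jK`: `X_1 = {s}`, `X_{h+2}` is column `h`
and `X_{xK+3} = {r}`. Both halves of (C3) then say that at most one edge joins a layer below
some `t` to a layer above `t`. Apart from `s v_{2,1}` and `v_{2,xK-1} r`, which cross only
`t = 2` and `t = xK + 2`, the only edges skipping a layer are the `v_{1,j} v_{1,j+1}`, and these
cross the pairwise disjoint ranges `jK + 2 < t < jK + K + 2`.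
-/

/-- Vertices of the graph `G(k,x,N)`: pairs `(i,j)` with either `i = 1`, `0 ≤ j ≤ x`
(the first row) or `2 ≤ i ≤ N`, `0 ≤ j ≤ x·K` where `K = k/2 - 1` (the other rows). -/
def GkxNVertex (k x N : ℕ) : Type :=
  {p : ℕ × ℕ // (p.1 = 1 ∧ p.2 ≤ x) ∨ (2 ≤ p.1 ∧ p.1 ≤ N ∧ p.2 ≤ x * (k / 2 - 1))}

/-- The (pre-symmetrization) edge relation of `G(k,x,N)`, with `K = k/2 - 1`:
`E₁`: consecutive vertices of row 1; `E₂`: consecutive vertices of a row `i ≥ 2`;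
`E₃`: `v_{1,j}` joined to `v_{i,jK}` for `i ≥ 2`; `E₄`: `v_{i,h}` joined to `v_{j,h}`
for `i ≠ j ≥ 2` whenever `K ∣ h`. -/
def GkxNRel (k : ℕ) (p q : ℕ × ℕ) : Prop :=
  (p.1 = 1 ∧ q.1 = 1 ∧ q.2 = p.2 + 1) ∨
  (2 ≤ p.1 ∧ q.1 = p.1 ∧ q.2 = p.2 + 1) ∨
  (p.1 = 1 ∧ 2 ≤ q.1 ∧ q.2 = p.2 * (k / 2 - 1)) ∨
  (2 ≤ p.1 ∧ 2 ≤ q.1 ∧ p.1 ≠ q.1 ∧ p.2 = q.2 ∧ (k / 2 - 1) ∣ p.2)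

/-- The graph `G(k,x,N)`. -/
def GkxN (k x N : ℕ) : SimpleGraph (GkxNVertex k x N) :=
  SimpleGraph.fromRel (fun p q => GkxNRel k p.val q.val)

/-- `R_i = X_{i+1} ∪ ⋯ ∪ X_l` (1-based indexing of the parts `X`). -/
def Rset {V : Type*} (X : ℕ → Set V) (l i : ℕ) : Set V :=
  ⋃ j ∈ Finset.Icc (i + 1) l, X j

/-- `L_i = X_1 ∪ ⋯ ∪ X_{l-i}` (1-based indexing of the parts `X`). -/
def Lset {V : Type*} (X : ℕ → Set V) (l i : ℕ) : Set V :=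
  ⋃ j ∈ Finset.Icc 1 (l - i), X j

/-- Membership of `G` in the class `𝒢(n,b,l,c)` of Das Sarma et al., with prescribed
endpoint vertices `s` and `r`: there are partitions `X_1, …, X_l` of `V` (1-based, with
`X_1 = {s}` and `X_l = {r}` singletons) and `Q_1, …, Q_b` of `V ∖ {s,r}` satisfying
conditions (C1), (C2) and (C3). -/
def InGClassWith {V : Type*} (G : SimpleGraph V) (n b l c : ℕ) (s r : V) : Prop :=
  Nat.card V = n ∧ 3 ≤ l ∧
  ∃ (X : ℕ → Set V) (Q : ℕ → Set V),
    -- (C1): `X_1, …, X_l` is a partition of `V` with `X_1 = {s}`, `X_l = {r}` singletons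
    (∀ i j, 1 ≤ i → i < j → j ≤ l → Disjoint (X i) (X j)) ∧
    (⋃ i ∈ Finset.Icc 1 l, X i) = Set.univ ∧
    X 1 = {s} ∧ X l = {r} ∧
    -- (C2): `Q_1, …, Q_b` is a partition of `V ∖ {s,r}` into connected sets,
    -- each with an edge to `s` and an edge to `r`
    (∀ i j, 1 ≤ i → i < j → j ≤ b → Disjoint (Q i) (Q j)) ∧
    (⋃ i ∈ Finset.Icc 1 b, Q i) = Set.univ \ {s, r} ∧
    (∀ i, 1 ≤ i → i ≤ b → (G.induce (Q i)).Connected) ∧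
    (∀ i, 1 ≤ i → i ≤ b → ∃ q ∈ Q i, G.Adj s q) ∧
    (∀ i, 1 ≤ i → i ≤ b → ∃ q ∈ Q i, G.Adj r q) ∧
    -- (C3): for `2 ≤ i ≤ l/2 - 1`, at most `c` edges join `R_i` to the outside of
    -- `R_{i-1}`, and at most `c` edges join `L_i` to the outside of `L_{i-1}`
    (∀ i, 2 ≤ i → i ≤ l / 2 - 1 →
      {e : Sym2 V | ∃ u v, G.Adj u v ∧ u ∈ Rset X l i ∧ v ∉ Rset X l (i - 1) ∧
        e = s(u, v)}.ncard ≤ c ∧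
      {e : Sym2 V | ∃ u v, G.Adj u v ∧ u ∈ Lset X l i ∧ v ∉ Lset X l (i - 1) ∧
        e = s(u, v)}.ncard ≤ c)

/-- Membership of `G` in the class `𝒢(n,b,l,c)`. -/
def InGClass {V : Type*} (G : SimpleGraph V) (n b l c : ℕ) : Prop :=
  ∃ s r : V, InGClassWith G n b l c s r

open SimpleGraph

lemma SimpleGraph.induce_connected_of_exists_adj_lt {V : Type*} {G : SimpleGraph V} {S : Set V}
    (h : V → ℕ) {v₀ : V} (hv₀ : v₀ ∈ S)
    (hdesc : ∀ v ∈ S, v ≠ v₀ → ∃ w ∈ S, h w < h v ∧ G.Adj w v) :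
    (G.induce S).Connected := by
  have reach : ∀ n, ∀ v (hv : v ∈ S), h v = n → (G.induce S).Reachable ⟨v₀, hv₀⟩ ⟨v, hv⟩ := by
    intro n
    induction n using Nat.strong_induction_on with
    | _ n ih =>
      intro v hv hn
      by_cases hvv : v = v₀
      · subst hvv; rfl
      obtain ⟨w, hw, hlt, hadj⟩ := hdesc v hv hvv
      exact (ih _ (hn ▸ hlt) w hw rfl).trans (Adj.reachable (G := G.induce S) hadj)
  rw [connected_iff_exists_forall_reachable]
  exact ⟨⟨v₀, hv₀⟩, fun v => reach _ v v.2 rfl⟩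

section Levels

variable {V : Type*}

def edgesAcross (G : SimpleGraph V) (lev : V → ℕ) (t : ℕ) : Set (Sym2 V) :=
  {e | ∃ u v, G.Adj u v ∧ lev u < t ∧ t < lev v ∧ e = s(u, v)}

lemma mem_Rset_fibres {lev : V → ℕ} {l : ℕ} (hle : ∀ v, lev v ≤ l) (i : ℕ) (v : V) :
    v ∈ Rset (fun t => {v | lev v = t}) l i ↔ i + 1 ≤ lev v := by
  simp [Rset, hle v]

lemma mem_Lset_fibres {lev : V → ℕ} {l : ℕ} (hpos : ∀ v, 1 ≤ lev v) (i : ℕ) (v : V) :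
    v ∈ Lset (fun t => {v | lev v = t}) l i ↔ lev v ≤ l - i := by
  simp [Lset, hpos v]

theorem inGClassWith_of_levels {G : SimpleGraph V} {b l c : ℕ} {s r : V} (lev part : V → ℕ)
    (hl : 3 ≤ l) (hpos : ∀ v, 1 ≤ lev v) (hle : ∀ v, lev v ≤ l)
    (hs : ∀ v, lev v = 1 ↔ v = s) (hr : ∀ v, lev v = l ↔ v = r)
    (hpart : ∀ v, v ≠ s → v ≠ r → 1 ≤ part v ∧ part v ≤ b)
    (hconn : ∀ i, 1 ≤ i → i ≤ b → (G.induce {v | v ≠ s ∧ v ≠ r ∧ part v = i}).Connected)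
    (hadj_s : ∀ i, 1 ≤ i → i ≤ b → ∃ q ∈ {v | v ≠ s ∧ v ≠ r ∧ part v = i}, G.Adj s q)
    (hadj_r : ∀ i, 1 ≤ i → i ≤ b → ∃ q ∈ {v | v ≠ s ∧ v ≠ r ∧ part v = i}, G.Adj r q)
    (hacross : ∀ t, 2 ≤ t → t < l → (edgesAcross G lev t).ncard ≤ c) :
    InGClassWith G (Nat.card V) b l c s r := by
  refine ⟨rfl, hl, fun t => {v | lev v = t}, fun i => {v | v ≠ s ∧ v ≠ r ∧ part v = i},
    ?_, ?_, ?_, ?_, ?_, ?_, hconn, hadj_s, hadj_r, fun i hi2 hil => ⟨?_, ?_⟩⟩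
  · intro i j _ hij _
    exact Set.disjoint_left.2 fun v hi hj => hij.ne (hi.symm.trans hj)
  · ext v
    simpa using ⟨hpos v, hle v⟩
  · ext v; simp [hs]
  · ext v; simp [hr]
  · intro i j _ hij _
    exact Set.disjoint_left.2 fun v hi hj => hij.ne (hi.2.2.symm.trans hj.2.2)
  · ext v
    simp only [Set.mem_iUnion, Finset.mem_Icc, Set.mem_ofPred_eq, Set.mem_sdiff, Set.mem_univ,
      Set.mem_insert_iff, Set.mem_singleton_iff, not_or, true_and, exists_prop]
    exact ⟨fun ⟨_, _, hvs, hvr, _⟩ => ⟨hvs, hvr⟩,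
      fun ⟨hvs, hvr⟩ => ⟨part v, hpart v hvs hvr, hvs, hvr, rfl⟩⟩
  · convert hacross i (by omega) (by omega) using 2
    ext e
    simp only [mem_Rset_fibres hle, edgesAcross, Set.mem_ofPred_eq, not_le]
    constructor <;>
    · rintro ⟨u, v, huv, hu, hv, rfl⟩; exact ⟨v, u, huv.symm, by omega, by omega, Sym2.eq_swap⟩
  · convert hacross (l - i + 1) (by omega) (by omega) using 2
    ext e
    simp only [mem_Lset_fibres hpos, edgesAcross, Set.mem_ofPred_eq, not_le]
    constructor <;>
    · rintro ⟨u, v, huv, hu, hv, rfl⟩; exact ⟨u, v, huv, by omega, by omega, rfl⟩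

end Levels

namespace GkxN

variable {k x N : ℕ}

def column (k : ℕ) (p : ℕ × ℕ) : ℕ := if p.1 = 1 then p.2 * (k / 2 - 1) else p.2

lemma column_le (v : GkxNVertex k x N) : column k v.1 ≤ x * (k / 2 - 1) := by
  rcases v.2 with ⟨h1, h2⟩ | ⟨h1, _, h3⟩
  · rw [column, if_pos h1]; exact Nat.mul_le_mul_right _ h2
  · rw [column, if_neg (by omega)]; exact h3

lemma column_one (j : ℕ) : column k (1, j) = j * (k / 2 - 1) := if_pos rfl

lemma column_of_fst_ne_one {p : ℕ × ℕ} (h : p.1 ≠ 1) : column k p = p.2 := if_neg h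

lemma column_succ (p : ℕ × ℕ) :
    column k (p.1, p.2 + 1) = column k p + if p.1 = 1 then k / 2 - 1 else 1 := by
  unfold column; split_ifs <;> simp only [add_one_mul]

lemma adj_of_rel {a b : GkxNVertex k x N} (hne : a.1 ≠ b.1) (h : GkxNRel k a.1 b.1) :
    (GkxN k x N).Adj a b :=
  (fromRel_adj _ a b).2 ⟨fun hab => hne (congrArg _ hab), Or.inl h⟩

lemma column_eq_or_eq_succ_of_rel {p q : ℕ × ℕ} (h : GkxNRel k p q) :
    column k q = column k p ∨ q = (p.1, p.2 + 1) := by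
  rcases h with ⟨h1, h2, h3⟩ | ⟨h1, h2, h3⟩ | ⟨h1, h2, h3⟩ | ⟨h1, h2, h3, h4, -⟩
  · exact Or.inr (Prod.ext (h2.trans h1.symm) h3)
  · exact Or.inr (Prod.ext h2 h3)
  · left; simp [column, h1, h3, show q.1 ≠ 1 by omega]
  · left; simp [column, h4, show q.1 ≠ 1 by omega, show p.1 ≠ 1 by omega]

lemma column_of_adj_source {u w : GkxNVertex k x N} (hu : u.1 = (2, 0))
    (h : (GkxN k x N).Adj u w) : column k w.1 = 0 ∨ w.1 = (2, 1) := by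
  have hcu : column k u.1 = 0 := by simp [column, hu]
  rcases ((fromRel_adj _ u w).1 h).2 with h' | h'
  · rcases column_eq_or_eq_succ_of_rel h' with hc | hw
    · exact Or.inl (hc.trans hcu)
    · exact Or.inr (by rw [hw, hu])
  · rcases column_eq_or_eq_succ_of_rel h' with hc | hw
    · exact Or.inl (hc.symm.trans hcu)
    · simp [hu] at hw

lemma column_of_adj_sink {u w : GkxNVertex k x N} (hu : u.1 = (2, x * (k / 2 - 1)))
    (h : (GkxN k x N).Adj u w) :
    column k w.1 = x * (k / 2 - 1) ∨ w.1 = (2, x * (k / 2 - 1) - 1) := by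
  have hcu : column k u.1 = x * (k / 2 - 1) := by simp [column, hu]
  rcases ((fromRel_adj _ u w).1 h).2 with h' | h'
  · rcases column_eq_or_eq_succ_of_rel h' with hc | hw
    · exact Or.inl (hc.trans hcu)
    · have := column_le w
      simp [column, hw, hu] at this
  · rcases column_eq_or_eq_succ_of_rel h' with hc | hw
    · exact Or.inl (hc.symm.trans hcu)
    · rw [hu, Prod.ext_iff] at hw
      exact Or.inr (Prod.ext hw.1.symm (by simp only; omega))

/-- The layer `X_t` is the fibre of `level` over `t`. -/
def level (k x : ℕ) (p : ℕ × ℕ) : ℕ :=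
  if p = (2, 0) then 1
  else if p = (2, x * (k / 2 - 1)) then x * (k / 2 - 1) + 3
  else column k p + 2

lemma one_le_level (p : ℕ × ℕ) : 1 ≤ level k x p := by
  unfold level; split_ifs <;> omega

lemma level_le (v : GkxNVertex k x N) : level k x v.1 ≤ x * (k / 2 - 1) + 3 := by
  have := column_le v
  unfold level; split_ifs <;> omega

lemma level_source : level k x (2, 0) = 1 := by simp [level]

lemma level_sink (hm : x * (k / 2 - 1) ≠ 0) :
    level k x (2, x * (k / 2 - 1)) = x * (k / 2 - 1) + 3 := by
  simp [level, hm]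

lemma level_eq_column_add_two {p : ℕ × ℕ} (h₀ : p ≠ (2, 0)) (hm : p ≠ (2, x * (k / 2 - 1))) :
    level k x p = column k p + 2 := by
  simp [level, h₀, hm]

lemma eq_of_level_add_two_le (hm : 2 ≤ x * (k / 2 - 1)) {u v : GkxNVertex k x N}
    (h : (GkxN k x N).Adj u v) (hlev : level k x u.1 + 2 ≤ level k x v.1) :
    (u.1 = (2, 0) ∧ v.1 = (2, 1)) ∨
    (u.1 = (2, x * (k / 2 - 1) - 1) ∧ v.1 = (2, x * (k / 2 - 1))) ∨
    ∃ j, u.1 = (1, j) ∧ v.1 = (1, j + 1) := by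
  have hv₀ : v.1 ≠ (2, 0) := fun hv => by rw [hv, level_source] at hlev; omega
  have hum : u.1 ≠ (2, x * (k / 2 - 1)) := fun hu => by
    have := level_le v
    rw [hu, level_sink (by omega)] at hlev
    omega
  by_cases hu₀ : u.1 = (2, 0)
  · refine Or.inl ⟨hu₀, (column_of_adj_source hu₀ h).resolve_left fun hc => ?_⟩
    by_cases hvm : v.1 = (2, x * (k / 2 - 1))
    · have : column k v.1 = x * (k / 2 - 1) := by simp [column, hvm]
      omega
    · rw [level_eq_column_add_two hv₀ hvm, hc, hu₀, level_source] at hlev; omega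
  by_cases hvm : v.1 = (2, x * (k / 2 - 1))
  · refine Or.inr (Or.inl ⟨(column_of_adj_sink hvm h.symm).resolve_left fun hc => ?_, hvm⟩)
    rw [level_eq_column_add_two hu₀ hum, hc, hvm, level_sink (by omega)] at hlev; omega
  rw [level_eq_column_add_two hu₀ hum, level_eq_column_add_two hv₀ hvm] at hlev
  rcases ((fromRel_adj _ u v).1 h).2 with h' | h'
  · rcases column_eq_or_eq_succ_of_rel h' with hc | hv
    · omega
    · rw [hv, column_succ] at hlev
      split_ifs at hlev with hrow
      · exact Or.inr (Or.inr ⟨u.1.2, Prod.ext hrow rfl, by rw [hv, hrow]⟩)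
      · omega
  · rcases column_eq_or_eq_succ_of_rel h' with hc | hu
    · omega
    · rw [hu, column_succ] at hlev
      omega

/-- The endpoints of the only edge crossing level `t`, if there is one; the edge
`v_{1,j} v_{1,j+1}` crosses the levels `jK + 3, …, jK + K + 1`. -/
def crossing (k x t : ℕ) : (ℕ × ℕ) × (ℕ × ℕ) :=
  if t = 2 then ((2, 0), (2, 1))
  else if t = x * (k / 2 - 1) + 2 then ((2, x * (k / 2 - 1) - 1), (2, x * (k / 2 - 1)))
  else ((1, (t - 3) / (k / 2 - 1)), (1, (t - 3) / (k / 2 - 1) + 1))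

lemma endpoints_eq_crossing (hm : 2 ≤ x * (k / 2 - 1)) {u v : GkxNVertex k x N}
    (h : (GkxN k x N).Adj u v) {t : ℕ} (hu : level k x u.1 < t) (hv : t < level k x v.1) :
    (u.1, v.1) = crossing k x t := by
  rcases eq_of_level_add_two_le hm h (by omega) with ⟨hu', hv'⟩ | ⟨hu', hv'⟩ | ⟨j, hu', hv'⟩
  · rw [hu', level_source] at hu
    rw [hv', level_eq_column_add_two (by simp) (by grind), column_of_fst_ne_one (by simp)] at hv
    rw [crossing, if_pos (by omega), hu', hv']
  · rw [hv', level_sink (by omega)] at hv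
    rw [hu', level_eq_column_add_two (by grind) (by grind), column_of_fst_ne_one (by simp)] at hu
    rw [crossing, if_neg (by omega), if_pos (by omega), hu', hv']
  · have hj : (j + 1) * (k / 2 - 1) ≤ x * (k / 2 - 1) := by
      have := v.2
      rw [hv'] at this
      exact Nat.mul_le_mul_right _ (by omega)
    rw [hu', level_eq_column_add_two (by simp) (by simp)] at hu
    rw [hv', level_eq_column_add_two (by simp) (by simp)] at hv
    rw [column_one] at hu hv
    rw [add_one_mul] at hv hj
    have hdiv : (t - 3) / (k / 2 - 1) = j :=
      Nat.div_eq_of_lt_le (by omega) (by rw [add_one_mul]; omega)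
    rw [crossing, if_neg (by omega), if_neg (by omega), hdiv, hu', hv']

lemma ncard_edgesAcross_le_one (hm : 2 ≤ x * (k / 2 - 1)) (t : ℕ) :
    (edgesAcross (GkxN k x N) (fun v => level k x v.1) t).ncard ≤ 1 := by
  have hsub : (edgesAcross (GkxN k x N) (fun v => level k x v.1) t).Subsingleton := by
    rintro _ ⟨u₁, v₁, h₁, hu₁, hv₁, rfl⟩ _ ⟨u₂, v₂, h₂, hu₂, hv₂, rfl⟩
    have := (endpoints_eq_crossing hm h₁ hu₁ hv₁).trans (endpoints_eq_crossing hm h₂ hu₂ hv₂).symm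
    simp only [Prod.mk.injEq] at this
    rw [Subtype.ext this.1, Subtype.ext this.2]
  exact (Set.ncard_le_one hsub.finite).2 fun _ ha _ hb => hsub ha hb

section Rows

variable (hN : 2 ≤ N)

def source : GkxNVertex k x N := ⟨(2, 0), Or.inr ⟨le_rfl, hN, Nat.zero_le _⟩⟩

def sink : GkxNVertex k x N := ⟨(2, x * (k / 2 - 1)), Or.inr ⟨le_rfl, hN, le_rfl⟩⟩

lemma ne_source_iff {v : GkxNVertex k x N} : v ≠ source hN ↔ v.1 ≠ (2, 0) :=
  not_congr Subtype.ext_iff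

lemma ne_sink_iff {v : GkxNVertex k x N} : v ≠ sink hN ↔ v.1 ≠ (2, x * (k / 2 - 1)) :=
  not_congr Subtype.ext_iff

lemma level_eq_one_iff (v : GkxNVertex k x N) : level k x v.1 = 1 ↔ v = source hN := by
  refine ⟨fun h => Subtype.ext ?_, fun h => by rw [h]; exact level_source⟩
  unfold level at h
  split_ifs at h with h₀ <;> first | exact h₀ | omega

lemma level_eq_iff_sink (hm : x * (k / 2 - 1) ≠ 0) (v : GkxNVertex k x N) :
    level k x v.1 = x * (k / 2 - 1) + 3 ↔ v = sink hN := by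
  refine ⟨fun h => Subtype.ext ?_, fun h => by rw [h]; exact level_sink hm⟩
  have := column_le v
  unfold level at h
  split_ifs at h with h₀ hm' <;> first | exact hm' | omega

def innerRow (k x : ℕ) (i : ℕ) : Set (GkxNVertex k x N) :=
  {v | v ≠ source hN ∧ v ≠ sink hN ∧ v.1.1 = i}

lemma exists_adj_pred (v : GkxNVertex k x N) (hv : 1 ≤ v.1.2) :
    ∃ w : GkxNVertex k x N, w.1 = (v.1.1, v.1.2 - 1) ∧ (GkxN k x N).Adj w v := by
  refine ⟨⟨(v.1.1, v.1.2 - 1), by rcases v.2 with h | h <;> [left; right] <;> omega⟩, rfl, ?_⟩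
  refine adj_of_rel (fun h => by simp only [Prod.ext_iff] at h; omega) ?_
  rcases v.2 with h | h
  · exact Or.inl ⟨h.1, h.1, by simp only; omega⟩
  · exact Or.inr (Or.inl ⟨h.1, rfl, by simp only; omega⟩)

lemma exists_innerRow_start (hm : 2 ≤ x * (k / 2 - 1)) {i : ℕ} (hi : 1 ≤ i) (hiN : i ≤ N) :
    ∃ v₀ ∈ innerRow hN k x i, v₀.1 = (i, if i = 2 then 1 else 0) := by
  refine ⟨⟨(i, if i = 2 then 1 else 0), ?_⟩,
    ⟨(ne_source_iff hN).2 ?_, (ne_sink_iff hN).2 ?_, rfl⟩, rfl⟩ <;> grind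

lemma innerRow_connected (hm : 2 ≤ x * (k / 2 - 1)) {i : ℕ} (hi : 1 ≤ i) (hiN : i ≤ N) :
    ((GkxN k x N).induce (innerRow hN k x i)).Connected := by
  obtain ⟨v₀, hv₀, hv₀i⟩ := exists_innerRow_start hN hm hi hiN
  refine induce_connected_of_exists_adj_lt (fun v => v.1.2) hv₀ ?_
  rintro v ⟨hvs, hvr, rfl⟩ hne
  rw [ne_source_iff] at hvs
  rw [ne_sink_iff] at hvr
  have hbound : v.1.2 ≤ x * (k / 2 - 1) ∨ v.1.1 = 1 := by rcases v.2 with h | h <;> omega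
  have hv₀' : v.1 ≠ v₀.1 := fun h => hne (Subtype.ext h)
  have hpos : 1 ≤ v.1.2 := by grind
  obtain ⟨w, hw, hadj⟩ := exists_adj_pred v hpos
  refine ⟨w, ⟨(ne_source_iff hN).2 ?_, (ne_sink_iff hN).2 ?_, by rw [hw]⟩,
    by simp only [hw]; omega, hadj⟩ <;> grind

lemma exists_adj_source (hm : 2 ≤ x * (k / 2 - 1)) {i : ℕ} (hi : 1 ≤ i) (hiN : i ≤ N) :
    ∃ q ∈ innerRow hN k x i, (GkxN k x N).Adj (source hN) q := by
  obtain ⟨v₀, hv₀, hv₀i⟩ := exists_innerRow_start hN hm hi hiN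
  refine ⟨v₀, hv₀, ?_⟩
  rcases (by omega : i = 1 ∨ i = 2 ∨ 3 ≤ i) with rfl | rfl | h3
  · exact (adj_of_rel (by simp [hv₀i, source]) (by simp [GkxNRel, hv₀i, source])).symm
  · exact adj_of_rel (by simp [hv₀i, source]) (by simp [GkxNRel, hv₀i, source])
  · exact adj_of_rel (by grind [source])
      (.inr <| .inr <| .inr ⟨le_rfl, by grind, by grind [source], by grind [source], dvd_zero _⟩)

lemma exists_adj_sink (hm : 2 ≤ x * (k / 2 - 1)) {i : ℕ} (hi : 1 ≤ i) (hiN : i ≤ N) :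
    ∃ q ∈ innerRow hN k x i, (GkxN k x N).Adj (sink hN) q := by
  rcases (by omega : i = 1 ∨ i = 2 ∨ 3 ≤ i) with rfl | rfl | h3
  · refine ⟨⟨(1, x), Or.inl ⟨rfl, le_rfl⟩⟩,
      ⟨(ne_source_iff hN).2 (by simp), (ne_sink_iff hN).2 (by simp), rfl⟩, ?_⟩
    exact (adj_of_rel (by simp [sink]) (by simp [GkxNRel, sink])).symm
  · refine ⟨⟨(2, x * (k / 2 - 1) - 1), Or.inr ⟨le_rfl, hN, by omega⟩⟩,
      ⟨(ne_source_iff hN).2 (by grind), (ne_sink_iff hN).2 (by grind), rfl⟩, ?_⟩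
    exact (adj_of_rel (by grind [sink]) (by grind [GkxNRel, sink])).symm
  · refine ⟨⟨(i, x * (k / 2 - 1)), Or.inr ⟨by omega, hiN, le_rfl⟩⟩,
      ⟨(ne_source_iff hN).2 (by grind), (ne_sink_iff hN).2 (by grind), rfl⟩, ?_⟩
    exact adj_of_rel (by grind [sink])
      (.inr <| .inr <| .inr ⟨le_rfl, h3.trans' (by omega), by grind [sink], rfl, dvd_mul_left _ _⟩)

end Rows

theorem inGClass (hm : 2 ≤ x * (k / 2 - 1)) (hN : 2 ≤ N) :
    InGClass (GkxN k x N) (Nat.card (GkxNVertex k x N)) N (x * (k / 2 - 1) + 3) 1 :=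
  ⟨source hN, sink hN, inGClassWith_of_levels (fun v => level k x v.1) (fun v => v.1.1)
    (by omega) (fun v => one_le_level v.1) level_le (level_eq_one_iff hN)
    (level_eq_iff_sink hN (by omega)) (fun v _ _ => by rcases v.2 with h | h <;> omega)
    (fun _ hi hiN => innerRow_connected hN hm hi hiN)
    (fun _ hi hiN => exists_adj_source hN hm hi hiN)
    (fun _ hi hiN => exists_adj_sink hN hm hi hiN)
    (fun t _ _ => ncard_edgesAcross_le_one hm t)⟩

end GkxN

theorem GkxN_mem_GClass_general (k D N : ℕ) (hk : 4 ≤ k)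
    (hD : 2 * (k / 2 - 1) < D) (hN : 2 * k * D ≤ N) :
    InGClass (GkxN k (D - (k / 2 - 1)) N)
      (Nat.card (GkxNVertex k (D - (k / 2 - 1)) N)) N
      ((D - (k / 2 - 1)) * (k / 2 - 1) + 3) 1 := by
  have hK : 1 ≤ k / 2 - 1 := by omega
  have hx : 2 ≤ D - (k / 2 - 1) := by omega
  exact GkxN.inGClass (by nlinarith) (by nlinarith)

/-- For even `k ≥ 4`, `K = k/2 - 1`, `D > 2K` and `N ≥ 2kD`, setting `x = D - K`, the
graph `G(k,x,N)` belongs to the class `𝒢(n, N, xK + 3, 1)`, where `n` is its number of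
vertices. -/
theorem GkxN_mem_GClass (k D N : ℕ) (hk : 4 ≤ k) (hke : Even k)
    (hD : 2 * (k / 2 - 1) < D) (hN : 2 * k * D ≤ N) :
    InGClass (GkxN k (D - (k / 2 - 1)) N)
      (Nat.card (GkxNVertex k (D - (k / 2 - 1)) N)) N
      ((D - (k / 2 - 1)) * (k / 2 - 1) + 3) 1 :=
  GkxN_mem_GClass_general k D N hk hD hN
end
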